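/- Let S1, m, u be rational numbers with S1 ≠ 0, 3m^2+1 ≠ 0 and (m+1)u^2 − m + 1 ≠ 0. Define h = −2S1^2·u·((m+1)(m^2+1)u − m(m^2+3)) / ((3m^2+1)((m+1)u^2 − m + 1)), t1 = (S1^2 − h)/S1, s1 = ((3m^2+1)h − (m^2−1)S1^2)/((3m^2+1)S1), assume 2h + 3(s1+t1)(t1−S1) ≠ 0, define t2 = [−h^2 + (s1^2 + s1·S1 + S1^2)h + (s1+t1)(t1−S1)(s1^2 + (t1−S1)s1 + t1^2 − t1·S1 + S1^2)] / (2h + 3(s1+t1)(t1−S1)), and set T1 = s1 + t1 − S1 and T2 = t2. Then T1^2 − 4T2 = S1^2·φ(u) / ((3m^2+1)((m+1)u^2 − m + 1))^2, where φ(u) = (m^6 − 26m^4 − 31m^2 − 8)(m+1)^2·u^4 − 4m(m+1)(m^2+3)(m^4 − 6m^2 − 3)·u^3 + 2(m−1)(m+1)(3m^6 + 28m^4 + 31m^2 + 2)·u^2 − 4m(m−1)(m^2+3)(m^4 + 6m^2 + 1)·u + m^2(m+1)^2(m−1)^4. -/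

import Mathlib

/-!
Both `s₁ + t₁ = 2(m² + 1)S₁/(3m² + 1)` and `t₁ - S₁ = -h/S₁` are simple in `h`, so the
denominator of `t₂` is `-4h/(3m² + 1)`; a factor `h` cancels from `t₂`, leaving `T₁² - 4T₂` as a
quadratic form in `h/S₁` and `S₁`. Substituting the value of `h` gives `φ(u)`.
-/

section

variable {K : Type*} [Field K]

theorem s₁_add_t₁_eq {S₁ m h t₁ s₁ : K} (hS₁ : S₁ ≠ 0) (hm : 3 * m ^ 2 + 1 ≠ 0)
    (ht₁ : t₁ = (S₁ ^ 2 - h) / S₁)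
    (hs₁ : s₁ = ((3 * m ^ 2 + 1) * h - (m ^ 2 - 1) * S₁ ^ 2) / ((3 * m ^ 2 + 1) * S₁)) :
    s₁ + t₁ = 2 * (m ^ 2 + 1) * S₁ / (3 * m ^ 2 + 1) := by
  rw [ht₁, hs₁]
  field_simp
  ring

theorem t₁_sub_S₁_eq {S₁ h t₁ : K} (hS₁ : S₁ ≠ 0) (ht₁ : t₁ = (S₁ ^ 2 - h) / S₁) :
    t₁ - S₁ = -(h / S₁) := by
  rw [ht₁]
  field_simp
  ring

theorem discr_eq_quadratic_in_h {S₁ m h t₁ s₁ t₂ : K} (hS₁ : S₁ ≠ 0)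
    (hm : 3 * m ^ 2 + 1 ≠ 0) (ht₁ : t₁ = (S₁ ^ 2 - h) / S₁)
    (hs₁ : s₁ = ((3 * m ^ 2 + 1) * h - (m ^ 2 - 1) * S₁ ^ 2) / ((3 * m ^ 2 + 1) * S₁))
    (hden : 2 * h + 3 * (s₁ + t₁) * (t₁ - S₁) ≠ 0)
    (ht₂ : t₂ = (-h ^ 2 + (s₁ ^ 2 + s₁ * S₁ + S₁ ^ 2) * h +
        (s₁ + t₁) * (t₁ - S₁) * (s₁ ^ 2 + (t₁ - S₁) * s₁ + t₁ ^ 2 - t₁ * S₁ + S₁ ^ 2)) /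
      (2 * h + 3 * (s₁ + t₁) * (t₁ - S₁))) :
    (s₁ + t₁ - S₁) ^ 2 - 4 * t₂ =
      ((9 * m ^ 6 - 3 * m ^ 4 - 5 * m ^ 2 - 1) * h ^ 2 / S₁ ^ 2 +
        (6 * m ^ 6 + 38 * m ^ 4 + 18 * m ^ 2 + 2) * h +
        m ^ 2 * (m ^ 2 - 1) ^ 2 * S₁ ^ 2) / (3 * m ^ 2 + 1) ^ 2 := by
  have hadd := s₁_add_t₁_eq hS₁ hm ht₁ hs₁
  have hsub := t₁_sub_S₁_eq hS₁ ht₁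
  have hden_eq : 2 * h + 3 * (s₁ + t₁) * (t₁ - S₁) = -4 * h / (3 * m ^ 2 + 1) := by
    rw [hadd, hsub]
    field_simp
    ring
  -- `hden` also excludes characteristic 2, where the denominator vanishes identically.
  obtain ⟨h4, hh⟩ : (4 : K) ≠ 0 ∧ h ≠ 0 := by
    rw [← mul_ne_zero_iff, ← neg_ne_zero, ← neg_mul]
    simpa [hden_eq, hm] using hden
  rw [ht₂, hden_eq, hadd, hsub, ht₁, hs₁]
  -- Kept atomic: `field_simp` would expand `3 * m ^ 2 + 1` and then no longer match it with `hm`.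
  generalize hc : 3 * m ^ 2 + 1 = c at hm ⊢
  field_simp
  subst hc
  ring

theorem quadratic_in_h_eq_phi {S₁ m u h : K} (hS₁ : S₁ ≠ 0) (hm : 3 * m ^ 2 + 1 ≠ 0)
    (hu : (m + 1) * u ^ 2 - m + 1 ≠ 0)
    (hh : h = -2 * S₁ ^ 2 * u * ((m + 1) * (m ^ 2 + 1) * u - m * (m ^ 2 + 3)) /
      ((3 * m ^ 2 + 1) * ((m + 1) * u ^ 2 - m + 1))) :
    ((9 * m ^ 6 - 3 * m ^ 4 - 5 * m ^ 2 - 1) * h ^ 2 / S₁ ^ 2 +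
        (6 * m ^ 6 + 38 * m ^ 4 + 18 * m ^ 2 + 2) * h +
        m ^ 2 * (m ^ 2 - 1) ^ 2 * S₁ ^ 2) / (3 * m ^ 2 + 1) ^ 2 =
      S₁ ^ 2 * ((m ^ 6 - 26 * m ^ 4 - 31 * m ^ 2 - 8) * (m + 1) ^ 2 * u ^ 4 -
          4 * m * (m + 1) * (m ^ 2 + 3) * (m ^ 4 - 6 * m ^ 2 - 3) * u ^ 3 +
          2 * (m - 1) * (m + 1) * (3 * m ^ 6 + 28 * m ^ 4 + 31 * m ^ 2 + 2) * u ^ 2 -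
          4 * m * (m - 1) * (m ^ 2 + 3) * (m ^ 4 + 6 * m ^ 2 + 1) * u +
          m ^ 2 * (m + 1) ^ 2 * (m - 1) ^ 4) /
        ((3 * m ^ 2 + 1) * ((m + 1) * u ^ 2 - m + 1)) ^ 2 := by
  rw [hh]
  generalize hc : 3 * m ^ 2 + 1 = c at hm ⊢
  generalize hD : (m + 1) * u ^ 2 - m + 1 = D at hu ⊢
  field_simp
  subst hc hD
  ring

end

theorem stmt_9 (S₁ m u h t₁ s₁ t₂ T₁ T₂ : ℚ) (hS₁ : S₁ ≠ 0)
    (hm : 3 * m ^ 2 + 1 ≠ 0)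
    (hu : (m + 1) * u ^ 2 - m + 1 ≠ 0)
    (hh : h = -2 * S₁ ^ 2 * u * ((m + 1) * (m ^ 2 + 1) * u - m * (m ^ 2 + 3)) /
      ((3 * m ^ 2 + 1) * ((m + 1) * u ^ 2 - m + 1)))
    (ht₁ : t₁ = (S₁ ^ 2 - h) / S₁)
    (hs₁ : s₁ = ((3 * m ^ 2 + 1) * h - (m ^ 2 - 1) * S₁ ^ 2) /
      ((3 * m ^ 2 + 1) * S₁))
    (hden : 2 * h + 3 * (s₁ + t₁) * (t₁ - S₁) ≠ 0)
    (ht₂ : t₂ = (-h ^ 2 + (s₁ ^ 2 + s₁ * S₁ + S₁ ^ 2) * h +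
        (s₁ + t₁) * (t₁ - S₁) *
          (s₁ ^ 2 + (t₁ - S₁) * s₁ + t₁ ^ 2 - t₁ * S₁ + S₁ ^ 2)) /
      (2 * h + 3 * (s₁ + t₁) * (t₁ - S₁)))
    (hT₁ : T₁ = s₁ + t₁ - S₁) (hT₂ : T₂ = t₂) :
    T₁ ^ 2 - 4 * T₂ =
      S₁ ^ 2 * ((m ^ 6 - 26 * m ^ 4 - 31 * m ^ 2 - 8) * (m + 1) ^ 2 * u ^ 4 -
          4 * m * (m + 1) * (m ^ 2 + 3) * (m ^ 4 - 6 * m ^ 2 - 3) * u ^ 3 +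
          2 * (m - 1) * (m + 1) * (3 * m ^ 6 + 28 * m ^ 4 + 31 * m ^ 2 + 2) * u ^ 2 -
          4 * m * (m - 1) * (m ^ 2 + 3) * (m ^ 4 + 6 * m ^ 2 + 1) * u +
          m ^ 2 * (m + 1) ^ 2 * (m - 1) ^ 4) /
        ((3 * m ^ 2 + 1) * ((m + 1) * u ^ 2 - m + 1)) ^ 2 := by
  rw [hT₁, hT₂, discr_eq_quadratic_in_h hS₁ hm ht₁ hs₁ hden ht₂]
  exact quadratic_in_h_eq_phi hS₁ hm hu hh
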